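/- Let u, v, w be future-pointing spacelike vectors in the Minkowskian plane L² (representing the sides OA, AB, BC of a quadrilateral OABC), and let z = u + v + w (representing the side OC). If ‖z‖_h = ‖u‖_h + ‖v‖_h + ‖w‖_h, then the vectors u, v, w, z are collinear; more precisely, there exist positive reals s and t such that v = s·u and w = t·u. -/

import Mathlib

/-- The hyperbolic (Minkowskian) norm on ℝ². -/
noncomputable def hnorm (p : ℝ × ℝ) : ℝ := Real.sqrt |p.1 ^ 2 - p.2 ^ 2|

/-- A vector of the Minkowskian plane is future-pointing spacelike. -/
def FutureSpacelike (p : ℝ × ℝ) : Prop := 0 < p.1 ^ 2 - p.2 ^ 2 ∧ 0 < p.1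

/-!
The hyperbolic norm satisfies a *reverse* triangle inequality on future-pointing spacelike vectors,
`‖u‖_h + ‖v‖_h ≤ ‖u + v‖_h`, because the Minkowskian analogue of Cauchy–Schwarz is reversed:
`⟨u, v⟩ ^ 2 - ‖u‖_h ^ 2 ‖v‖_h ^ 2 = (u₁v₂ - u₂v₁) ^ 2 ≥ 0`. Equality therefore forces
`u₁v₂ = u₂v₁`, i.e. `v` is a positive multiple of `u`. Splitting `u + v + w = (u + v) + w`,
equality in the quadrilateral gives equality in both triangle inequalities.
-/

def minkowskiInner (p q : ℝ × ℝ) : ℝ := p.1 * q.1 - p.2 * q.2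

lemma hnorm_nonneg (p : ℝ × ℝ) : 0 ≤ hnorm p := Real.sqrt_nonneg _

lemma hnorm_sq {p : ℝ × ℝ} (hp : 0 < p.1 ^ 2 - p.2 ^ 2) : hnorm p ^ 2 = p.1 ^ 2 - p.2 ^ 2 := by
  rw [hnorm, abs_of_pos hp, Real.sq_sqrt hp.le]

lemma minkowskiInner_sq_sub_mul (p q : ℝ × ℝ) :
    minkowskiInner p q ^ 2 - (p.1 ^ 2 - p.2 ^ 2) * (q.1 ^ 2 - q.2 ^ 2) =
      (p.1 * q.2 - p.2 * q.1) ^ 2 := by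
  unfold minkowskiInner; ring

lemma add_sq_sub_sq (p q : ℝ × ℝ) :
    (p + q).1 ^ 2 - (p + q).2 ^ 2 =
      (p.1 ^ 2 - p.2 ^ 2) + 2 * minkowskiInner p q + (q.1 ^ 2 - q.2 ^ 2) := by
  simp only [Prod.fst_add, Prod.snd_add, minkowskiInner]; ring

namespace FutureSpacelike

variable {u v : ℝ × ℝ}

lemma abs_snd_lt (hu : FutureSpacelike u) : |u.2| < u.1 :=
  abs_lt_of_sq_lt_sq (by linarith [hu.1]) hu.2.le

lemma minkowskiInner_pos (hu : FutureSpacelike u) (hv : FutureSpacelike v) :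
    0 < minkowskiInner u v := by
  have h : |u.2| * |v.2| < u.1 * v.1 :=
    mul_lt_mul'' hu.abs_snd_lt hv.abs_snd_lt (abs_nonneg _) (abs_nonneg _)
  rw [← abs_mul] at h
  unfold minkowskiInner; linarith [le_abs_self (u.2 * v.2)]

lemma add (hu : FutureSpacelike u) (hv : FutureSpacelike v) : FutureSpacelike (u + v) := by
  refine ⟨?_, add_pos hu.2 hv.2⟩
  rw [add_sq_sub_sq]
  linarith [hu.1, hv.1, hu.minkowskiInner_pos hv]

lemma hnorm_add_sq (hu : FutureSpacelike u) (hv : FutureSpacelike v) :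
    hnorm (u + v) ^ 2 = hnorm u ^ 2 + 2 * minkowskiInner u v + hnorm v ^ 2 := by
  rw [hnorm_sq (hu.add hv).1, hnorm_sq hu.1, hnorm_sq hv.1, add_sq_sub_sq]

lemma hnorm_mul_le_minkowskiInner (hu : FutureSpacelike u) (hv : FutureSpacelike v) :
    hnorm u * hnorm v ≤ minkowskiInner u v := by
  refine abs_le_of_sq_le_sq' ?_ (hu.minkowskiInner_pos hv).le |>.2
  rw [mul_pow, hnorm_sq hu.1, hnorm_sq hv.1]
  nlinarith [minkowskiInner_sq_sub_mul u v, sq_nonneg (u.1 * v.2 - u.2 * v.1)]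

lemma eq_smul_of_hnorm_mul_eq (hu : FutureSpacelike u) (hv : FutureSpacelike v)
    (h : hnorm u * hnorm v = minkowskiInner u v) : v = (v.1 / u.1) • u := by
  have hcross : (u.1 * v.2 - u.2 * v.1) ^ 2 = 0 := by
    rw [← minkowskiInner_sq_sub_mul, ← h, mul_pow, hnorm_sq hu.1, hnorm_sq hv.1, sub_self]
  have hu1 := hu.2.ne'
  ext
  · simp [hu1]
  · simp only [Prod.smul_snd, smul_eq_mul]
    field_simp
    linarith [pow_eq_zero_iff two_ne_zero |>.mp hcross]

lemma hnorm_add_hnorm_le (hu : FutureSpacelike u) (hv : FutureSpacelike v) :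
    hnorm u + hnorm v ≤ hnorm (u + v) := by
  rw [← pow_le_pow_iff_left₀ (add_nonneg (hnorm_nonneg u) (hnorm_nonneg v)) (hnorm_nonneg _)
    two_ne_zero, hu.hnorm_add_sq hv]
  nlinarith [hu.hnorm_mul_le_minkowskiInner hv]

lemma exists_pos_smul_of_hnorm_add_eq (hu : FutureSpacelike u) (hv : FutureSpacelike v)
    (h : hnorm (u + v) = hnorm u + hnorm v) : ∃ s : ℝ, 0 < s ∧ v = s • u := by
  refine ⟨v.1 / u.1, div_pos hv.2 hu.2, hu.eq_smul_of_hnorm_mul_eq hv ?_⟩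
  have hsq := hu.hnorm_add_sq hv
  rw [h] at hsq
  linarith

end FutureSpacelike

theorem quadrilateral_equality_collinear
    (u v w : ℝ × ℝ) (hu : FutureSpacelike u) (hv : FutureSpacelike v)
    (hw : FutureSpacelike w)
    (heq : hnorm (u + v + w) = hnorm u + hnorm v + hnorm w) :
    ∃ s t : ℝ, 0 < s ∧ 0 < t ∧ v = s • u ∧ w = t • u := by
  have huv := hu.add hv
  have h₁ := hu.hnorm_add_hnorm_le hv
  have h₂ := huv.hnorm_add_hnorm_le hw
  obtain ⟨s, hs, rfl⟩ := hu.exists_pos_smul_of_hnorm_add_eq hv (by linarith)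
  obtain ⟨r, hr, rfl⟩ := huv.exists_pos_smul_of_hnorm_add_eq hw (by linarith)
  exact ⟨s, r * (1 + s), hs, by positivity, rfl, by module⟩
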